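/- Fix n ≥ 1 and let p₁, …, pₙ be distinct prime numbers. For each k ∈ {1,…,n}, let P_k be the (n+1)×(n+1) real matrix equal to the identity except that its (1,1)-entry is p_k and its (k+1,1)-entry is 1 − p_k. Then the map sending each finite list (i₁,…,i_s) over {1,…,n} to the vector P_{i_s}·P_{i_{s−1}}·⋯·P_{i₁}·e₁ ∈ ℝ^{n+1} (where e₁ = (1,0,…,0)ᵀ) is injective: two lists producing the same vector must be equal. -/
import Mathlib

noncomputable def primeEncodeMat {n : ℕ} (p : Fin n → ℕ) (k : Fin n) :
    Matrix (Fin (n + 1)) (Fin (n + 1)) ℝ :=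
  fun i j =>
    if j = 0 then
      (if i = 0 then (p k : ℝ) else if i = k.succ then 1 - (p k : ℝ) else 0)
    else (if i = j then 1 else 0)

namespace PEaux

variable {n : ℕ} (p : Fin n → ℕ)

/-- Product of primes along the word. -/
def Nv : List (Fin n) → ℕ
  | [] => 1
  | a :: w => p a * Nv w

/-- Sum of prefix products at positions with letter `k`. -/
def Sv : List (Fin n) → Fin n → ℕ
  | [], _ => 0
  | a :: w, k => (if k = a then 1 else 0) + p a * Sv w k

lemma Nv_concat (w : List (Fin n)) (a : Fin n) :
    Nv p (w ++ [a]) = Nv p w * p a := by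
  induction w with
  | nil => simp [Nv]
  | cons b w ih => simp [Nv, ih]; ring

lemma Sv_concat (w : List (Fin n)) (a k : Fin n) :
    Sv p (w ++ [a]) k = Sv p w k + if k = a then Nv p w else 0 := by
  induction w with
  | nil => simp [Sv, Nv]
  | cons b w ih =>
      simp only [List.cons_append, Sv, Nv, mul_add, mul_ite, mul_zero, ih,
        List.append_eq]
      split_ifs <;> ring

lemma Nv_pos (hp2 : ∀ k, 2 ≤ p k) (w : List (Fin n)) : 1 ≤ Nv p w := by
  induction w with
  | nil => simp [Nv]
  | cons a w ih =>
      have := hp2 a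
      simp only [Nv]
      nlinarith

lemma Sv_bound (hp2 : ∀ k, 2 ≤ p k) (w : List (Fin n)) (k : Fin n) :
    p k * Sv p w k + 2 ≤ 2 * Nv p w := by
  induction w with
  | nil => simp [Sv, Nv]
  | cons a w ih =>
      have hpa := hp2 a
      have hpk := hp2 k
      have hN := Nv_pos p hp2 w
      simp only [Sv, Nv, mul_add, mul_ite, mul_one, mul_zero]
      rcases eq_or_ne k a with rfl | h
      · simp only [if_pos rfl, if_true, ite_true]
        nlinarith [Nat.mul_le_mul_left (p k) ih]
      · simp only [if_neg h]
        nlinarith [Nat.mul_le_mul_left (p a) ih]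

lemma decode_last (hp2 : ∀ k, 2 ≤ p k) (w : List (Fin n)) (a : Fin n) :
    Nv p (w ++ [a]) ≤ p a * Sv p (w ++ [a]) a := by
  rw [Nv_concat, Sv_concat]
  simp only [if_pos rfl, if_true, ite_true]
  nlinarith [Nv_pos p hp2 w]

lemma decode_ne (hp2 : ∀ k, 2 ≤ p k) (w : List (Fin n)) (a k : Fin n) (h : k ≠ a) :
    p k * Sv p (w ++ [a]) k < Nv p (w ++ [a]) := by
  rw [Nv_concat, Sv_concat, if_neg h]
  have hb := Sv_bound p hp2 w k
  have h2 : Nv p w * 2 ≤ Nv p w * p a := Nat.mul_le_mul_left _ (hp2 a)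
  have hN := Nv_pos p hp2 w
  simp only [add_zero]
  linarith

lemma pair_inj (hp2 : ∀ k, 2 ≤ p k) : ∀ w₁ w₂ : List (Fin n), Nv p w₁ = Nv p w₂ →
    (∀ k, Sv p w₁ k = Sv p w₂ k) → w₁ = w₂ := by
  intro w₁
  induction w₁ using List.reverseRecOn with
  | nil =>
      intro w₂ hN _
      rcases w₂.eq_nil_or_concat with rfl | ⟨v, b, rfl⟩
      · rfl
      · exfalso
        rw [List.concat_eq_append, Nv_concat] at hN
        have := Nv_pos p hp2 v
        have := hp2 b
        simp only [Nv] at hN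
        nlinarith
  | append_singleton u a ih =>
      intro w₂ hN hS
      rcases w₂.eq_nil_or_concat with rfl | ⟨v, b, rfl⟩
      · exfalso
        rw [Nv_concat] at hN
        have := Nv_pos p hp2 u
        have := hp2 a
        simp only [Nv] at hN
        nlinarith
      · rw [List.concat_eq_append] at hN hS ⊢
        have hab : a = b := by
          by_contra hne
          have h1 := decode_last p hp2 u a
          have h2 := decode_ne p hp2 v b a hne
          rw [hN, hS a] at h1
          omega
        subst hab
        have hNu : Nv p u = Nv p v := by
          rw [Nv_concat, Nv_concat] at hN
          have := hp2 a
          exact Nat.eq_of_mul_eq_mul_right (by omega) hN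
        have hSu : ∀ k, Sv p u k = Sv p v k := by
          intro k
          have := hS k
          rw [Sv_concat, Sv_concat, hNu] at this
          omega
        rw [ih v hNu hSu]

/-- The encoding function from the theorem statement. -/
noncomputable def f (w : List (Fin n)) : Fin (n + 1) → ℝ :=
  ((w.map (primeEncodeMat p)).reverse.prod).mulVec
    (fun j => if j = 0 then (1 : ℝ) else 0)

lemma f_concat (w : List (Fin n)) (a : Fin n) :
    f p (w ++ [a]) = (primeEncodeMat p a).mulVec (f p w) := by
  simp only [f, List.map_append, List.reverse_append, List.map_cons, List.map_nil,
    List.reverse_cons, List.reverse_nil, List.nil_append, List.singleton_append,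
    List.prod_cons, Matrix.mulVec_mulVec]

lemma step (a : Fin n) (v : Fin (n + 1) → ℝ) (i : Fin (n + 1)) :
    (primeEncodeMat p a).mulVec v i =
      (if i = 0 then (p a : ℝ) * v 0
       else (if i = a.succ then (1 - (p a : ℝ)) * v 0 else 0) + v i) := by
  simp only [Matrix.mulVec, dotProduct, primeEncodeMat, Fin.sum_univ_succ]
  induction i using Fin.cases with
  | zero =>
      simp [Fin.succ_ne_zero, (Fin.succ_ne_zero _).symm]
  | succ m =>
      simp [Fin.succ_ne_zero, (Fin.succ_ne_zero _).symm, Fin.succ_inj]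

lemma f_eq (w : List (Fin n)) :
    f p w = fun i => Fin.cases ((Nv p w : ℝ))
      (fun k => (1 - (p k : ℝ)) * (Sv p w k : ℝ)) i := by
  induction w using List.reverseRecOn with
  | nil =>
      funext i
      simp only [f, List.map_nil, List.reverse_nil, List.prod_nil, Matrix.one_mulVec]
      induction i using Fin.cases with
      | zero => simp [Nv]
      | succ m => simp [Sv, Fin.succ_ne_zero]
  | append_singleton u a ih =>
      funext i
      rw [f_concat, step, ih]
      induction i using Fin.cases with
      | zero =>
          simp [Nv_concat, mul_comm]
      | succ m =>
          simp only [Fin.succ_ne_zero, if_neg, Fin.cases_succ, Fin.cases_zero,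
            Sv_concat, Fin.succ_inj]
          rcases eq_or_ne m a with rfl | h
          · simp [if_pos rfl]
            ring
          · simp [if_neg h, Fin.succ_inj, h]

end PEaux

/-- Injectivity of the prime-based string encoding: with distinct primes
`p₁, …, pₙ`, the map sending a list `(i₁, …, i_s)` over `{1,…,n}` to
`P_{i_s} ⋯ P_{i₁} · e₁` is injective. -/
theorem primeEncode_injective (n : ℕ) (hn : 1 ≤ n) (p : Fin n → ℕ)
    (hp : ∀ k, (p k).Prime) (hdist : Function.Injective p) :
    Function.Injective (fun w : List (Fin n) =>
      ((w.map (primeEncodeMat p)).reverse.prod).mulVec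
        (fun j => if j = 0 then (1 : ℝ) else 0)) := by
  have hp2 : ∀ k, 2 ≤ p k := fun k => (hp k).two_le
  intro w₁ w₂ h
  have h' : PEaux.f p w₁ = PEaux.f p w₂ := h
  rw [PEaux.f_eq, PEaux.f_eq] at h'
  apply PEaux.pair_inj p hp2
  · have := congrFun h' 0
    simpa using this
  · intro k
    have := congrFun h' k.succ
    simp only [Fin.cases_succ] at this
    have hne : (1 - (p k : ℝ)) ≠ 0 := by
      have := hp2 k
      have : (2 : ℝ) ≤ (p k : ℝ) := by exact_mod_cast this
      intro hc
      nlinarith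
    have := mul_left_cancel₀ hne this
    exact_mod_cast this
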